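/- arXiv:1805.06142 — 5 statements merged into one kernel-verified Lean document; each statement's English description precedes it below -/
import Mathlib

section
/- The twisted Steenrod square squares to zero: T ∘ T = 0 as a map R → R, i.e. for every f ∈ R one has x_1·(x_1·f + D(f)) + D(x_1·f + D(f)) = 0. (This is the computation Sq²_{det γ_n} ∘ Sq²_{det γ_n} = 0 carried out in the proof of Proposition 3.7 of the paper.) -/
/-!
In characteristic two the square `D ∘ D` of a derivation is again a derivation, since the cross
terms `D a * D b` of its Leibniz rule occur twice. Expanding `T (T f)` with the same cancellation
gives `(x₁² + D x₁) f + D (D f)`, and `D x₁ = x₁²`, so `T ∘ T = D ∘ D`. It therefore suffices to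
see that `D (D x_j) = 0` for each generator, which the Wu formula reduces to
`(j - 1) j ≡ 0 mod 2`.
-/

open MvPolynomial

/-- The variable `x_j` (1-indexed, `1 ≤ j ≤ n`) in the mod-2 Chow ring
`Ch^•(BGL_n) ≅ (ℤ/2ℤ)[x_1,…,x_n]`; by convention `x_j = 0` for `j` out of range
(in particular `x_{n+1} = 0`). -/
noncomputable def xv (n : ℕ) (j : ℕ) : MvPolynomial (Fin n) (ZMod 2) :=
  if h : 1 ≤ j ∧ j ≤ n then X (⟨j - 1, by omega⟩ : Fin n) else 0

namespace Derivation

variable {R A : Type*} [CommSemiring R] [CommRing A] [Algebra R A] [CharP A 2]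
  (D : Derivation R A A)

theorem apply_apply_mul_of_charTwo (a b : A) :
    D (D (a * b)) = a * D (D b) + b * D (D a) := by
  simp only [leibniz, map_add, smul_eq_mul]
  linear_combination (D a * D b) * (CharTwo.two_eq_zero : (2 : A) = 0)

def compSelfOfCharTwo : Derivation R A A :=
  mk' (D.toLinearMap ∘ₗ D.toLinearMap) D.apply_apply_mul_of_charTwo

@[simp]
theorem compSelfOfCharTwo_apply (a : A) : D.compSelfOfCharTwo a = D (D a) := rfl

theorem twist_apply_twist_of_charTwo {x : A} (hx : D x = x * x) (f : A) :
    x * (x * f + D f) + D (x * f + D f) = D (D f) := by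
  rw [map_add, leibniz, hx, smul_eq_mul, smul_eq_mul]
  linear_combination (x * D f + x * x * f) * (CharTwo.two_eq_zero : (2 : A) = 0)

end Derivation

theorem MvPolynomial.derivation_apply_apply_eq_zero_of_charTwo {σ R : Type*} [CommRing R]
    [CharP R 2] {D : Derivation R (MvPolynomial σ R) (MvPolynomial σ R)}
    (hD : ∀ i, D (D (X i)) = 0) (f : MvPolynomial σ R) : D (D f) = 0 := by
  have : D.compSelfOfCharTwo = 0 := derivation_ext fun i => by simpa using hD i
  simpa using DFunLike.congr_fun this f

section WuFormula

variable {n : ℕ}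

def SatisfiesWuFormula
    (D : Derivation (ZMod 2) (MvPolynomial (Fin n) (ZMod 2)) (MvPolynomial (Fin n) (ZMod 2))) :
    Prop :=
  ∀ j : ℕ, 1 ≤ j → j ≤ n →
    D (xv n j) = xv n 1 * xv n j + C ((j - 1 : ℕ) : ZMod 2) * xv n (j + 1)

theorem xv_succ (i : Fin n) : xv n (i + 1) = X i := by
  simp [xv, i.isLt]

theorem xv_zero : xv n 0 = 0 := by
  simp [xv]

theorem xv_of_lt {j : ℕ} (h : n < j) : xv n j = 0 := by
  simp [xv, h.not_ge]

variable {D : Derivation (ZMod 2) (MvPolynomial (Fin n) (ZMod 2)) (MvPolynomial (Fin n) (ZMod 2))}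

/-- Valid for every `j`: outside `1 ≤ j ≤ n` both `xv n j` and, by truncated subtraction at
`j = 0`, the coefficient `(j - 1 : ℕ)` of `xv n (j + 1)` vanish. -/
theorem derivation_xv (hD : SatisfiesWuFormula D) (j : ℕ) :
    D (xv n j) = xv n 1 * xv n j + C ((j - 1 : ℕ) : ZMod 2) * xv n (j + 1) := by
  rcases Nat.eq_zero_or_pos j with rfl | hj
  · simp [xv_zero]
  rcases le_or_gt j n with hjn | hnj
  · exact hD j hj hjn
  · simp [xv_of_lt hnj, xv_of_lt (hnj.trans j.lt_succ_self)]

theorem derivation_xv_one (hD : SatisfiesWuFormula D) : D (xv n 1) = xv n 1 * xv n 1 := by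
  simpa using derivation_xv hD 1

theorem derivation_derivation_xv (hD : SatisfiesWuFormula D) (j : ℕ) : D (D (xv n j)) = 0 := by
  have hcoeff : C ((j - 1 : ℕ) : ZMod 2) * C ((j + 1 - 1 : ℕ) : ZMod 2)
      = (0 : MvPolynomial (Fin n) (ZMod 2)) := by
    rw [← map_mul, ← Nat.cast_mul, Nat.add_sub_cancel, mul_comm,
      (ZMod.natCast_eq_zero_iff_even.mpr j.even_mul_pred_self), map_zero]
  rw [derivation_xv hD j, map_add, Derivation.leibniz, Derivation.leibniz, derivation_C,
    derivation_xv_one hD, derivation_xv hD j, derivation_xv hD (j + 1)]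
  simp only [smul_eq_mul]
  linear_combination xv n (j + 1 + 1) * hcoeff + (xv n 1 * xv n 1 * xv n j
      + xv n 1 * C ((j - 1 : ℕ) : ZMod 2) * xv n (j + 1)) *
    (CharTwo.two_eq_zero : (2 : MvPolynomial (Fin n) (ZMod 2)) = 0)

end WuFormula

theorem twisted_steenrod_sq_zero_general (n : ℕ)
    (D : Derivation (ZMod 2) (MvPolynomial (Fin n) (ZMod 2)) (MvPolynomial (Fin n) (ZMod 2)))
    (hD : ∀ j : ℕ, 1 ≤ j → j ≤ n →
      D (xv n j) = xv n 1 * xv n j + C ((j - 1 : ℕ) : ZMod 2) * xv n (j + 1)) :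
    ∀ f : MvPolynomial (Fin n) (ZMod 2),
      xv n 1 * (xv n 1 * f + D f) + D (xv n 1 * f + D f) = 0 := by
  intro f
  rw [D.twist_apply_twist_of_charTwo (derivation_xv_one hD)]
  refine derivation_apply_apply_eq_zero_of_charTwo (fun i => ?_) f
  rw [← xv_succ]
  exact derivation_derivation_xv hD _

/-- The twisted Steenrod square `T = Sq²_{det γ_n}`, `T(f) = x_1·f + D(f)`, squares to zero:
for every `f`, `x_1·(x_1·f + D(f)) + D(x_1·f + D(f)) = 0`. -/
theorem twisted_steenrod_sq_zero (n : ℕ) (hn : 1 ≤ n)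
    (D : Derivation (ZMod 2) (MvPolynomial (Fin n) (ZMod 2)) (MvPolynomial (Fin n) (ZMod 2)))
    (hD : ∀ j : ℕ, 1 ≤ j → j ≤ n →
      D (xv n j) = xv n 1 * xv n j + C ((j - 1 : ℕ) : ZMod 2) * xv n (j + 1)) :
    ∀ f : MvPolynomial (Fin n) (ZMod 2),
      xv n 1 * (xv n 1 * f + D f) + D (xv n 1 * f + D f) = 0 :=
  twisted_steenrod_sq_zero_general n D hD
end

section
/- Every element of the image of D and every element of the image of T lies in the (ℤ/2ℤ)-subalgebra of R generated by the elements b_J = D(m_J) and t_J = T(m_J) for all subsets J ⊆ {1,…,⌊(n−1)/2⌋} (including t_∅ = x_1), together with the elements x_{2i}² for all i with 2 ≤ 2i ≤ n and the element x_n. (This is Corollary 3.9 of the paper: the images of the Steenrod squares Sq²_ℒ on Ch^•(BGL_n) are contained in the subring generated by Sq²_𝒪 and Sq²_{det γ_n} of products of even Stiefel–Whitney classes, Sq²_{det γ_n}(1), the squares c̄_{2i}², and c̄_n.) -/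
open MvPolynomial

noncomputable def mprod (n : ℕ) (J : Finset ℕ) : MvPolynomial (Fin n) (ZMod 2) :=
  ∏ j ∈ J, xv n (2 * j)

noncomputable def genSet3 (n : ℕ)
    (D : Derivation (ZMod 2) (MvPolynomial (Fin n) (ZMod 2)) (MvPolynomial (Fin n) (ZMod 2))) :
    Set (MvPolynomial (Fin n) (ZMod 2)) :=
  {g | ∃ J : Finset ℕ, J ⊆ Finset.Icc 1 ((n - 1) / 2) ∧ g = D (mprod n J)} ∪
  {g | ∃ J : Finset ℕ, J ⊆ Finset.Icc 1 ((n - 1) / 2) ∧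
      g = xv n 1 * mprod n J + D (mprod n J)} ∪
  {g | ∃ i : ℕ, 2 ≤ 2 * i ∧ 2 * i ≤ n ∧ g = (xv n (2 * i)) ^ 2} ∪
  {xv n n}

section TwistedPreimage

variable {K R : Type*} [CommRing K] [CommRing R] [Algebra K R]

def twistedPreimage (A : Subalgebra K R) (D : Derivation K R R) (x : R) : Submodule K R :=
  A.toSubmodule.comap D.toLinearMap ⊓ A.toSubmodule.comap (LinearMap.mulLeft K x + D.toLinearMap)

variable {A : Subalgebra K R} {D : Derivation K R R} {x : R}

theorem mem_twistedPreimage {f : R} :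
    f ∈ twistedPreimage A D x ↔ D f ∈ A ∧ x * f + D f ∈ A :=
  Iff.rfl

theorem mul_mem_twistedPreimage {a a' f : R} (ha : a ∈ A) (ha' : a' ∈ A) (hDa : D a = x * a')
    (hf : f ∈ twistedPreimage A D x) : a * f ∈ twistedPreimage A D x := by
  obtain ⟨hDf, hTf⟩ := mem_twistedPreimage.1 hf
  have hDaf : D (a * f) = a * D f + a' * (x * f + D f) - a' * D f := by
    rw [Derivation.leibniz, hDa, smul_eq_mul, smul_eq_mul]; ring
  refine mem_twistedPreimage.2 ⟨?_, ?_⟩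
  · rw [hDaf]
    exact sub_mem (add_mem (mul_mem ha hDf) (mul_mem ha' hTf)) (mul_mem ha' hDf)
  · have hTaf : x * (a * f) + D (a * f) =
        a * (x * f + D f) + a' * (x * f + D f) - a' * D f := by
      rw [hDaf]; ring
    rw [hTaf]
    exact sub_mem (add_mem (mul_mem ha hTf) (mul_mem ha' hTf)) (mul_mem ha' hDf)

end TwistedPreimage

theorem Derivation.map_sq_eq_zero {K R : Type*} [CommRing K] [CommRing R] [Algebra K R]
    [CharP R 2] (D : Derivation K R R) (y : R) : D (y ^ 2) = 0 := by
  rw [sq, Derivation.leibniz, smul_eq_mul, CharTwo.add_self_eq_zero]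

section WuFormula

variable {n : ℕ}

theorem xv_eq_zero {j : ℕ} (h : ¬ (1 ≤ j ∧ j ≤ n)) : xv n j = 0 :=
  dif_neg h

theorem X_eq_xv (i : Fin n) : X i = xv n (i + 1) := by
  simp [xv]

variable {D : Derivation (ZMod 2) (MvPolynomial (Fin n) (ZMod 2)) (MvPolynomial (Fin n) (ZMod 2))}

theorem derivation_xv_of_odd_or_eq_top (hD : SatisfiesWuFormula D) {k : ℕ}
    (hk : k % 2 = 1 ∨ k = n) : D (xv n k) = xv n 1 * xv n k := by
  by_cases hkn : 1 ≤ k ∧ k ≤ n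
  · rw [hD k hkn.1 hkn.2]
    rcases hk with hk | hk
    · have : ((k - 1 : ℕ) : ZMod 2) = 0 := ZMod.natCast_eq_zero_iff_even.2 ⟨k / 2, by omega⟩
      simp [this]
    · rw [hk, xv_eq_zero (n := n) (j := n + 1) (by omega), mul_zero, add_zero]
  · simp [xv_eq_zero hkn]

theorem derivation_xv_even (hD : SatisfiesWuFormula D) {j : ℕ} (hj : 1 ≤ j) (hjn : 2 * j ≤ n) :
    D (xv n (2 * j)) = xv n 1 * xv n (2 * j) + xv n (2 * j + 1) := by
  have : ((2 * j - 1 : ℕ) : ZMod 2) = 1 := ZMod.natCast_eq_one_iff_odd.2 ⟨j - 1, by omega⟩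
  rw [hD (2 * j) (by omega) hjn, this, map_one, one_mul]

end WuFormula

section Generators

variable {n : ℕ}
  {D : Derivation (ZMod 2) (MvPolynomial (Fin n) (ZMod 2)) (MvPolynomial (Fin n) (ZMod 2))}
  {J : Finset ℕ}

theorem derivation_mprod_mem_adjoin (hJ : J ⊆ Finset.Icc 1 ((n - 1) / 2)) :
    D (mprod n J) ∈ Algebra.adjoin (ZMod 2) (genSet3 n D) :=
  Algebra.subset_adjoin (Or.inl (Or.inl (Or.inl ⟨J, hJ, rfl⟩)))

theorem twist_mprod_mem_adjoin (hJ : J ⊆ Finset.Icc 1 ((n - 1) / 2)) :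
    xv n 1 * mprod n J + D (mprod n J) ∈ Algebra.adjoin (ZMod 2) (genSet3 n D) :=
  Algebra.subset_adjoin (Or.inl (Or.inl (Or.inr ⟨J, hJ, rfl⟩)))

theorem sq_xv_even_mem_adjoin {i : ℕ} (hi : 1 ≤ i) (hin : 2 * i ≤ n) :
    xv n (2 * i) ^ 2 ∈ Algebra.adjoin (ZMod 2) (genSet3 n D) :=
  Algebra.subset_adjoin (Or.inl (Or.inr ⟨i, by omega, hin, rfl⟩))

theorem xv_top_mem_adjoin : xv n n ∈ Algebra.adjoin (ZMod 2) (genSet3 n D) :=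
  Algebra.subset_adjoin (Or.inr rfl)

theorem xv_odd_mem_adjoin (hD : SatisfiesWuFormula D) {k : ℕ} (hk : k % 2 = 1) :
    xv n k ∈ Algebra.adjoin (ZMod 2) (genSet3 n D) := by
  by_cases hkn : 1 ≤ k ∧ k ≤ n
  · obtain rfl | hk1 : k = 1 ∨ 3 ≤ k := by omega
    · simpa [mprod] using twist_mprod_mem_adjoin (D := D) (Finset.empty_subset _)
    · have hJ : {k / 2} ⊆ Finset.Icc 1 ((n - 1) / 2) :=
        Finset.singleton_subset_iff.2 (Finset.mem_Icc.2 ⟨by omega, by omega⟩)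
      have := twist_mprod_mem_adjoin (D := D) hJ
      rwa [mprod, Finset.prod_singleton, derivation_xv_even hD (by omega) (by omega),
        ← add_assoc, CharTwo.add_self_eq_zero, zero_add, show 2 * (k / 2) + 1 = k by omega]
        at this
  · rw [xv_eq_zero hkn]
    exact zero_mem _

theorem mprod_mem_twistedPreimage (hJ : J ⊆ Finset.Icc 1 ((n - 1) / 2)) :
    mprod n J ∈ twistedPreimage (Algebra.adjoin (ZMod 2) (genSet3 n D)) D (xv n 1) :=
  ⟨derivation_mprod_mem_adjoin hJ, twist_mprod_mem_adjoin hJ⟩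

end Generators

section Absorption

variable {n : ℕ}
  {D : Derivation (ZMod 2) (MvPolynomial (Fin n) (ZMod 2)) (MvPolynomial (Fin n) (ZMod 2))}
  {p : MvPolynomial (Fin n) (ZMod 2)}

theorem mprod_mul_xv_even_mem_twistedPreimage
    (hp : ∀ J ⊆ Finset.Icc 1 ((n - 1) / 2),
      mprod n J * p ∈ twistedPreimage (Algebra.adjoin (ZMod 2) (genSet3 n D)) D (xv n 1))
    {j : ℕ} (hj : 1 ≤ j) (hjn : 2 * j < n) {J : Finset ℕ} (hJ : J ⊆ Finset.Icc 1 ((n - 1) / 2)) :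
    mprod n J * (p * xv n (2 * j)) ∈
      twistedPreimage (Algebra.adjoin (ZMod 2) (genSet3 n D)) D (xv n 1) := by
  by_cases hjJ : j ∈ J
  · have hsplit : mprod n J * (p * xv n (2 * j)) =
        xv n (2 * j) ^ 2 * (mprod n (J.erase j) * p) := by
      simp only [mprod]
      rw [← Finset.mul_prod_erase J _ hjJ]
      ring
    rw [hsplit]
    exact mul_mem_twistedPreimage (sq_xv_even_mem_adjoin hj hjn.le) (zero_mem _)
      (by rw [Derivation.map_sq_eq_zero, mul_zero]) (hp _ ((J.erase_subset j).trans hJ))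
  · have hmerge : mprod n J * (p * xv n (2 * j)) = mprod n (insert j J) * p := by
      simp only [mprod]
      rw [Finset.prod_insert hjJ]
      ring
    rw [hmerge]
    exact hp _ (Finset.insert_subset (Finset.mem_Icc.2 ⟨hj, by omega⟩) hJ)

theorem mprod_mul_xv_odd_or_top_mem_twistedPreimage (hD : SatisfiesWuFormula D) {J : Finset ℕ}
    (hp : mprod n J * p ∈ twistedPreimage (Algebra.adjoin (ZMod 2) (genSet3 n D)) D (xv n 1))
    {k : ℕ} (hk : k % 2 = 1 ∨ k = n) :
    mprod n J * (p * xv n k) ∈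
      twistedPreimage (Algebra.adjoin (ZMod 2) (genSet3 n D)) D (xv n 1) := by
  have hmem : xv n k ∈ Algebra.adjoin (ZMod 2) (genSet3 n D) := by
    rcases hk with hk | rfl
    · exact xv_odd_mem_adjoin hD hk
    · exact xv_top_mem_adjoin
  rw [show mprod n J * (p * xv n k) = xv n k * (mprod n J * p) by ring]
  exact mul_mem_twistedPreimage hmem hmem (derivation_xv_of_odd_or_eq_top hD hk) hp

theorem mprod_mul_mem_twistedPreimage (hD : SatisfiesWuFormula D)
    (f : MvPolynomial (Fin n) (ZMod 2)) :
    ∀ J ⊆ Finset.Icc 1 ((n - 1) / 2),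
      mprod n J * f ∈ twistedPreimage (Algebra.adjoin (ZMod 2) (genSet3 n D)) D (xv n 1) := by
  induction f using MvPolynomial.induction_on with
  | C c =>
    intro J hJ
    rw [mul_comm, ← smul_eq_C_mul]
    exact Submodule.smul_mem _ c (mprod_mem_twistedPreimage hJ)
  | add p q hp hq =>
    intro J hJ
    rw [mul_add]
    exact add_mem (hp J hJ) (hq J hJ)
  | mul_X p i hp =>
    intro J hJ
    rw [X_eq_xv]
    by_cases hk : ((i : ℕ) + 1) % 2 = 1 ∨ (i : ℕ) + 1 = n
    · exact mprod_mul_xv_odd_or_top_mem_twistedPreimage hD (hp J hJ) hk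
    · rw [show (i : ℕ) + 1 = 2 * (((i : ℕ) + 1) / 2) by omega]
      exact mprod_mul_xv_even_mem_twistedPreimage hp (by omega) (by omega) hJ

end Absorption

theorem image_steenrod_in_subalgebra_general (n : ℕ)
    (D : Derivation (ZMod 2) (MvPolynomial (Fin n) (ZMod 2)) (MvPolynomial (Fin n) (ZMod 2)))
    (hD : ∀ j : ℕ, 1 ≤ j → j ≤ n →
      D (xv n j) = xv n 1 * xv n j + C ((j - 1 : ℕ) : ZMod 2) * xv n (j + 1)) :
    ∀ f : MvPolynomial (Fin n) (ZMod 2),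
      D f ∈ Algebra.adjoin (ZMod 2) (genSet3 n D) ∧
      xv n 1 * f + D f ∈ Algebra.adjoin (ZMod 2) (genSet3 n D) := by
  intro f
  exact mem_twistedPreimage.1
    (by simpa [mprod] using mprod_mul_mem_twistedPreimage hD f ∅ (Finset.empty_subset _))

/-- Corollary 3.9: the images of the Steenrod squares `D = Sq²_𝒪` and
`T = Sq²_{det γ_n}` (`T f = x_1·f + D f`) on `Ch^•(BGL_n)` are contained in the
subalgebra generated by the classes `b_J`, `t_J`, `x_{2i}²` and `x_n`. -/
theorem image_steenrod_in_subalgebra (n : ℕ) (hn : 1 ≤ n)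
    (D : Derivation (ZMod 2) (MvPolynomial (Fin n) (ZMod 2)) (MvPolynomial (Fin n) (ZMod 2)))
    (hD : ∀ j : ℕ, 1 ≤ j → j ≤ n →
      D (xv n j) = xv n 1 * xv n j + C ((j - 1 : ℕ) : ZMod 2) * xv n (j + 1)) :
    ∀ f : MvPolynomial (Fin n) (ZMod 2),
      D f ∈ Algebra.adjoin (ZMod 2) (genSet3 n D) ∧
      xv n 1 * f + D f ∈ Algebra.adjoin (ZMod 2) (genSet3 n D) :=
  image_steenrod_in_subalgebra_general n D hD
end

section
/- For every i ≥ 1 with 2i+1 ≤ n, the identities D(x_{2i}·x_{2i+1}) = x_{2i+1}² and (D(x_{2i}))² + x_1²·x_{2i}² = x_{2i+1}² hold in R. (This is the mod-2 Chow identity ρ(p_{2i+1}) = (Sq²_𝒪(c̄_{2i}))² + ρ(p_{2i})·Sq²_𝒪(c̄_1) = Sq²_𝒪(c̄_{2i}·c̄_{2i+1}) = c̄_{2i+1}² proved in Proposition 3.24 of the paper, using ρ(p_{2i}) = c̄_{2i}² and Sq²_𝒪(c̄_1) = c̄_1².) -/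
open MvPolynomial

/- Writing `b = x_{2i}`, `c = x_{2i+1}`, the Wu formula gives `D b = x_1 b + c` and `D c = x_1 c`.
In characteristic 2 the Leibniz rule then yields `D (b c) = 2 x_1 b c + c² = c²`, and
`(D b)² = x_1² b² + c²` since squaring is additive. -/

section CharTwo

variable {R : Type*} [CommRing R] [CharP R 2]

theorem Derivation.apply_mul_eq_sq_of_charTwo {K : Type*} [CommSemiring K] [Algebra K R]
    (D : Derivation K R R) {a b c : R} (hb : D b = a * b + c) (hc : D c = a * c) :
    D (b * c) = c ^ 2 := by
  rw [D.leibniz, hb, hc, smul_eq_mul, smul_eq_mul]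
  linear_combination (a * b * c) * CharTwo.two_eq_zero (R := R)

theorem CharTwo.mul_add_sq_add_sq_mul_sq (a b c : R) :
    (a * b + c) ^ 2 + a ^ 2 * b ^ 2 = c ^ 2 := by
  linear_combination (a ^ 2 * b ^ 2 + a * b * c) * CharTwo.two_eq_zero (R := R)

end CharTwo

section Wu

variable {n : ℕ}
  {D : Derivation (ZMod 2) (MvPolynomial (Fin n) (ZMod 2)) (MvPolynomial (Fin n) (ZMod 2))}

theorem apply_xv_of_even
    (hD : ∀ j : ℕ, 1 ≤ j → j ≤ n →
      D (xv n j) = xv n 1 * xv n j + C ((j - 1 : ℕ) : ZMod 2) * xv n (j + 1))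
    {j : ℕ} (hj : Even j) (hj₀ : 1 ≤ j) (hjn : j ≤ n) :
    D (xv n j) = xv n 1 * xv n j + xv n (j + 1) := by
  have hodd : ((j - 1 : ℕ) : ZMod 2) = 1 :=
    ZMod.natCast_eq_one_iff_odd.2 (Nat.Even.sub_odd hj₀ hj odd_one)
  rw [hD j hj₀ hjn, hodd, map_one, one_mul]

theorem apply_xv_of_odd
    (hD : ∀ j : ℕ, 1 ≤ j → j ≤ n →
      D (xv n j) = xv n 1 * xv n j + C ((j - 1 : ℕ) : ZMod 2) * xv n (j + 1))
    {j : ℕ} (hj : Odd j) (hjn : j ≤ n) :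
    D (xv n j) = xv n 1 * xv n j := by
  have heven : ((j - 1 : ℕ) : ZMod 2) = 0 :=
    ZMod.natCast_eq_zero_iff_even.2 (Nat.Odd.sub_odd hj odd_one)
  rw [hD j hj.pos hjn, heven, map_zero, zero_mul, add_zero]

end Wu

theorem odd_pontryagin_mod2_general (n : ℕ)
    (D : Derivation (ZMod 2) (MvPolynomial (Fin n) (ZMod 2)) (MvPolynomial (Fin n) (ZMod 2)))
    (hD : ∀ j : ℕ, 1 ≤ j → j ≤ n →
      D (xv n j) = xv n 1 * xv n j + C ((j - 1 : ℕ) : ZMod 2) * xv n (j + 1)) :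
    ∀ i : ℕ, 1 ≤ i → 2 * i + 1 ≤ n →
      D (xv n (2 * i) * xv n (2 * i + 1)) = (xv n (2 * i + 1)) ^ 2 ∧
      (D (xv n (2 * i))) ^ 2 + (xv n 1) ^ 2 * (xv n (2 * i)) ^ 2 = (xv n (2 * i + 1)) ^ 2 := by
  intro i hi hin
  have hb := apply_xv_of_even hD (even_two_mul i) (by omega) (by omega)
  have hc := apply_xv_of_odd hD (odd_two_mul_add_one i) hin
  exact ⟨D.apply_mul_eq_sq_of_charTwo hb hc,
    hb ▸ CharTwo.mul_add_sq_add_sq_mul_sq _ _ _⟩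

/-- Proposition 3.24 mod 2: for `2i+1 ≤ n`, `D(x_{2i}·x_{2i+1}) = x_{2i+1}²` and
`(D(x_{2i}))² + x_1²·x_{2i}² = x_{2i+1}²` in `Ch^•(BGL_n)`. -/
theorem odd_pontryagin_mod2 (n : ℕ) (hn : 1 ≤ n)
    (D : Derivation (ZMod 2) (MvPolynomial (Fin n) (ZMod 2)) (MvPolynomial (Fin n) (ZMod 2)))
    (hD : ∀ j : ℕ, 1 ≤ j → j ≤ n →
      D (xv n j) = xv n 1 * xv n j + C ((j - 1 : ℕ) : ZMod 2) * xv n (j + 1)) :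
    ∀ i : ℕ, 1 ≤ i → 2 * i + 1 ≤ n →
      D (xv n (2 * i) * xv n (2 * i + 1)) = (xv n (2 * i + 1)) ^ 2 ∧
      (D (xv n (2 * i))) ^ 2 + (xv n 1) ^ 2 * (xv n (2 * i)) ^ 2 = (xv n (2 * i + 1)) ^ 2 :=
  odd_pontryagin_mod2_general n D hD
end

section
/- If n ≥ 2 is even, then there is a W-algebra isomorphism from R_n/I_n to the polynomial ring (R_{n−1}/I_{n−1})[X] in one variable over R_{n−1}/I_{n−1}, sending the class of the variable X of R_n to the polynomial variable X and the class of each variable P_i, B_J, T_J of R_n to the class of the variable of the same name in R_{n−1}/I_{n−1} (these variables agree since r(n) = r(n−1) for n even). Moreover, the induced map Φ̄_n : R_n/I_n → R_{n−1}/I_{n−1} is surjective. (Lemma 3.18 of the paper.) -/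
open MvPolynomial

/-- `r(n) = ⌊(n−1)/2⌋`, the largest index of a Pontryagin-class variable in `R_n`. -/
def rr (n : ℕ) : ℕ := (n - 1) / 2

/-- The index type of the variables of the polynomial `W`-algebra `R_n` (with `r = r(n)`):
the Pontryagin variables `P_i` (`1 ≤ i ≤ r`), the Euler variable `X`, the Bockstein
variables `B_J` for nonempty `J ⊆ {1,…,r}`, and the twisted Bockstein variables `T_J`
for `J ⊆ {1,…,r}` (including `T_∅`). -/
abbrev GVar (r : ℕ) : Type :=
  {i : ℕ // 1 ≤ i ∧ i ≤ r} ⊕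
    (Unit ⊕ ({J : Finset ℕ // J ⊆ Finset.Icc 1 r ∧ J.Nonempty} ⊕
      {J : Finset ℕ // J ⊆ Finset.Icc 1 r}))

/-- The polynomial `W`-algebra `R_n` on the variables above, for `r = r(n)`. -/
abbrev Rg (W : Type) [CommRing W] (r : ℕ) : Type := MvPolynomial (GVar r) W

variable (W : Type) [CommRing W]

/-- The variable `P_i` (zero if `i` is out of range). -/
noncomputable def Pv (r : ℕ) (i : ℕ) : Rg W r :=
  if h : 1 ≤ i ∧ i ≤ r then X (Sum.inl ⟨i, h⟩) else 0

/-- The variable `X`. -/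
noncomputable def Xv (r : ℕ) : Rg W r := X (Sum.inr (Sum.inl ()))

/-- The variable `B_J`, with the convention `B_∅ = 0` (and zero if `J ⊄ {1,…,r}`). -/
noncomputable def Bv (r : ℕ) (J : Finset ℕ) : Rg W r :=
  if h : J ⊆ Finset.Icc 1 r ∧ J.Nonempty then X (Sum.inr (Sum.inr (Sum.inl ⟨J, h⟩))) else 0

/-- The variable `T_J` (zero if `J ⊄ {1,…,r}`). -/
noncomputable def Tv (r : ℕ) (J : Finset ℕ) : Rg W r :=
  if h : J ⊆ Finset.Icc 1 r then X (Sum.inr (Sum.inr (Sum.inr ⟨J, h⟩))) else 0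

/-- `P_A = ∏_{a ∈ A} P_a`. -/
noncomputable def PP (r : ℕ) (A : Finset ℕ) : Rg W r := ∏ a ∈ A, Pv W r a

/-- Symmetric difference `Δ(A,B) = (A ∪ B) ∖ (A ∩ B)`. -/
def sdiff' (A B : Finset ℕ) : Finset ℕ := (A ∪ B) \ (A ∩ B)

/-- The generating set of the ideal `I_n ⊆ R_n`:
(1) `w·B_J`, `w·T_J` for `w ∈ I`;
(2) `X − T_{{(n−1)/2}}` if `n ≥ 3` is odd, and `X − T_∅` if `n = 1`;
(3) the four families of quadratic relations among the Bockstein classes. -/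
def relSet (Iid : Ideal W) (n : ℕ) : Set (Rg W (rr n)) :=
  {f | ∃ w ∈ Iid, ∃ J : Finset ℕ,
      f = C w * Bv W (rr n) J ∨ f = C w * Tv W (rr n) J} ∪
  {f | (n % 2 = 1 ∧ 3 ≤ n ∧ f = Xv W (rr n) - Tv W (rr n) {(n - 1) / 2}) ∨
       (n = 1 ∧ f = Xv W (rr n) - Tv W (rr n) ∅)} ∪
  {f | ∃ J J' : Finset ℕ, J ⊆ Finset.Icc 1 (rr n) ∧ J' ⊆ Finset.Icc 1 (rr n) ∧ J.Nonempty ∧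
      (f = Bv W (rr n) J * Bv W (rr n) J' -
            ∑ k ∈ J, Bv W (rr n) {k} * PP W (rr n) ((J.erase k) ∩ J') *
              Bv W (rr n) (sdiff' (J.erase k) J') ∨
       f = Bv W (rr n) J * Tv W (rr n) J' -
            ∑ k ∈ J, Bv W (rr n) {k} * PP W (rr n) ((J.erase k) ∩ J') *
              Tv W (rr n) (sdiff' (J.erase k) J') ∨
       f = Tv W (rr n) J * Bv W (rr n) J' - Bv W (rr n) J * Tv W (rr n) J' -
            Tv W (rr n) ∅ * PP W (rr n) (J ∩ J') * Bv W (rr n) (sdiff' J J') ∨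
       f = Tv W (rr n) J * Tv W (rr n) J' - Bv W (rr n) J * Bv W (rr n) J' -
            Tv W (rr n) ∅ * PP W (rr n) (J ∩ J') * Tv W (rr n) (sdiff' J J'))}

/-- The ideal `I_n ⊆ R_n`. -/
noncomputable def relIdeal (Iid : Ideal W) (n : ℕ) : Ideal (Rg W (rr n)) :=
  Ideal.span (relSet W Iid n)

/-- The value of `Φ_n` on the variables of `R_n`: `X ↦ 0`;
`P_i ↦ P_i` except `P_{(n−1)/2} ↦ X²` when `n` is odd;
`B_J ↦ B_J` and `T_J ↦ T_J` when `(n−1)/2 ∉ J` (or `n` is even), while for `n` odd and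
`J = J′ ⊔ {(n−1)/2}` one has `B_J ↦ T_{J′}·X` and `T_J ↦ B_{J′}·X`. -/
noncomputable def phiVar (n : ℕ) : GVar (rr n) → Rg W (rr (n - 1))
  | Sum.inl p =>
      if n % 2 = 1 ∧ p.1 = (n - 1) / 2 then (Xv W (rr (n - 1))) ^ 2
      else Pv W (rr (n - 1)) p.1
  | Sum.inr (Sum.inl _) => 0
  | Sum.inr (Sum.inr (Sum.inl p)) =>
      if n % 2 = 1 ∧ (n - 1) / 2 ∈ p.1 then
        Tv W (rr (n - 1)) (p.1.erase ((n - 1) / 2)) * Xv W (rr (n - 1))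
      else Bv W (rr (n - 1)) p.1
  | Sum.inr (Sum.inr (Sum.inr p)) =>
      if n % 2 = 1 ∧ (n - 1) / 2 ∈ p.1 then
        Bv W (rr (n - 1)) (p.1.erase ((n - 1) / 2)) * Xv W (rr (n - 1))
      else Tv W (rr (n - 1)) p.1

/-- The `W`-algebra homomorphism `Φ_n : R_n → R_{n−1}`. -/
noncomputable def Phi (n : ℕ) : Rg W (rr n) →ₐ[W] Rg W (rr (n - 1)) :=
  aeval (phiVar W n)

/-!
For even `n` the variables of `R_n` and `R_{n−1}` coincide, and both ideals contain the same
relations (1) and (3), none of which involves `X`; the only difference is the relation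
`X = T_K` in `I_{n−1}` (with `K = ∅` for `n = 2` and `K = {(n−2)/2}` otherwise). In a
quotient `MvPolynomial σ R ⧸ (S)` with `S` free of the variable `x₀`, adjoining the relation
`x₀ = t` (`t` free of `x₀`) just eliminates `x₀`, so the original quotient is the polynomial
ring in `x₀` over the new one. Under this isomorphism `Φ̄_n` is evaluation at `X = 0`, hence
surjective.
-/

namespace MvPolynomial

theorem X_mem_supported_of_mem {R σ : Type*} [CommSemiring R] {s : Set σ} {i : σ} (h : i ∈ s) :
    X i ∈ supported R s :=
  Algebra.subset_adjoin (Set.mem_image_of_mem X h)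

theorem eqOn_supported {R σ B : Type*} [CommSemiring R] [Semiring B] [Algebra R B] {s : Set σ}
    {φ ψ : MvPolynomial σ R →ₐ[R] B} (h : ∀ v ∈ s, φ (X v) = ψ (X v)) :
    Set.EqOn φ ψ (supported R s) :=
  AlgHom.eqOn_adjoin_iff.2 <| by rintro _ ⟨v, hv, rfl⟩; exact h v hv

noncomputable section

variable {R σ : Type*} [CommRing R] [DecidableEq σ] (x₀ : σ) (S : Set (MvPolynomial σ R))
  (t : MvPolynomial σ R)

def elimToPolynomial :
    MvPolynomial σ R →ₐ[R]
      Polynomial (MvPolynomial σ R ⧸ Ideal.span (insert (X x₀ - t) S)) :=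
  aeval (Function.update
    (fun v => Polynomial.C (Ideal.Quotient.mk (Ideal.span (insert (X x₀ - t) S)) (X v))) x₀
    Polynomial.X)

theorem elimToPolynomial_X_self : elimToPolynomial x₀ S t (X x₀) = Polynomial.X := by
  simp [elimToPolynomial]

theorem elimToPolynomial_of_mem_supported {p} (hp : p ∈ supported R {x₀}ᶜ) :
    elimToPolynomial x₀ S t p = Polynomial.C (Ideal.Quotient.mk _ p) :=
  eqOn_supported (ψ := Polynomial.CAlgHom.comp (Ideal.Quotient.mkₐ R _))
    (fun v hv => by simp [elimToPolynomial, Set.mem_compl_singleton_iff.1 hv]) hp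

def substX : MvPolynomial σ R →ₐ[R] MvPolynomial σ R :=
  aeval (Function.update X x₀ t)

theorem substX_X_self : substX x₀ t (X x₀) = t := by
  simp [substX]

theorem substX_of_mem_supported {p} (hp : p ∈ supported R {x₀}ᶜ) : substX x₀ t p = p :=
  eqOn_supported (ψ := AlgHom.id R _)
    (fun v hv => by simp [substX, Set.mem_compl_singleton_iff.1 hv]) hp

variable {x₀ S t} (hS : S ⊆ supported R {x₀}ᶜ) (ht : t ∈ supported R {x₀}ᶜ)

def elimQuotientToPolynomial :
    (MvPolynomial σ R ⧸ Ideal.span S) →ₐ[R]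
      Polynomial (MvPolynomial σ R ⧸ Ideal.span (insert (X x₀ - t) S)) :=
  Ideal.Quotient.liftₐ _ (elimToPolynomial x₀ S t) fun a ha => by
    refine (Ideal.span_le (I := RingHom.ker _)).2 (fun s hs => ?_) ha
    simpa [elimToPolynomial_of_mem_supported x₀ S t (hS hs), Ideal.Quotient.eq_zero_iff_mem]
      using Ideal.subset_span (Set.mem_insert_of_mem _ hs)

def elimOfPolynomial :
    Polynomial (MvPolynomial σ R ⧸ Ideal.span (insert (X x₀ - t) S)) →ₐ[R]
      MvPolynomial σ R ⧸ Ideal.span S :=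
  Polynomial.aevalTower
    (Ideal.Quotient.liftₐ _ ((Ideal.Quotient.mkₐ R _).comp (substX x₀ t)) fun a ha => by
      refine (Ideal.span_le (I := RingHom.ker _)).2 ?_ ha
      rintro _ (rfl | hs)
      · simp [substX_X_self, substX_of_mem_supported x₀ t ht]
      · simpa [substX_of_mem_supported x₀ t (hS hs), Ideal.Quotient.eq_zero_iff_mem]
          using Ideal.subset_span hs)
    (Ideal.Quotient.mk _ (X x₀))

@[simp]
theorem elimQuotientToPolynomial_mk (p : MvPolynomial σ R) :
    elimQuotientToPolynomial hS (Ideal.Quotient.mk _ p) = elimToPolynomial x₀ S t p :=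
  rfl

@[simp]
theorem elimOfPolynomial_C_mk (p : MvPolynomial σ R) :
    elimOfPolynomial hS ht (Polynomial.C (Ideal.Quotient.mk _ p)) =
      Ideal.Quotient.mk _ (substX x₀ t p) :=
  Polynomial.aevalTower_C _ _ _

@[simp]
theorem elimOfPolynomial_X : elimOfPolynomial hS ht Polynomial.X = Ideal.Quotient.mk _ (X x₀) :=
  Polynomial.aevalTower_X _ _

theorem elimOfPolynomial_comp_elimQuotientToPolynomial :
    (elimOfPolynomial hS ht).comp (elimQuotientToPolynomial hS) = AlgHom.id R _ := by
  refine Ideal.Quotient.algHom_ext R (MvPolynomial.algHom_ext fun v => ?_)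
  by_cases hv : v = x₀
  · subst hv
    simp [elimToPolynomial_X_self]
  · simp [elimToPolynomial, hv, substX]

theorem elimQuotientToPolynomial_comp_elimOfPolynomial :
    (elimQuotientToPolynomial hS).comp (elimOfPolynomial hS ht) = AlgHom.id R _ := by
  refine Polynomial.algHom_ext' (Ideal.Quotient.algHom_ext R (MvPolynomial.algHom_ext fun v => ?_))
    (by simp [elimToPolynomial_X_self])
  by_cases hv : v = x₀
  · subst hv
    simpa [substX_X_self, elimToPolynomial_of_mem_supported v S t ht] using
      (Ideal.Quotient.eq.2 (Ideal.subset_span (Set.mem_insert _ _))).symm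
  · simp [elimToPolynomial, hv, substX]

def quotientAlgEquivPolynomial :
    (MvPolynomial σ R ⧸ Ideal.span S) ≃ₐ[R]
      Polynomial (MvPolynomial σ R ⧸ Ideal.span (insert (X x₀ - t) S)) :=
  AlgEquiv.ofAlgHom _ _ (elimQuotientToPolynomial_comp_elimOfPolynomial hS ht)
    (elimOfPolynomial_comp_elimQuotientToPolynomial hS ht)

theorem quotientAlgEquivPolynomial_mk_X_self :
    quotientAlgEquivPolynomial hS ht (Ideal.Quotient.mk _ (X x₀)) = Polynomial.X :=
  elimToPolynomial_X_self x₀ S t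

theorem quotientAlgEquivPolynomial_mk_of_mem_supported {p} (hp : p ∈ supported R {x₀}ᶜ) :
    quotientAlgEquivPolynomial hS ht (Ideal.Quotient.mk _ p) =
      Polynomial.C (Ideal.Quotient.mk _ p) :=
  elimToPolynomial_of_mem_supported x₀ S t hp

end

end MvPolynomial

variable {W}

abbrev xVar (r : ℕ) : GVar r := Sum.inr (Sum.inl ())

theorem Pv_eq_X {r i : ℕ} (h : 1 ≤ i ∧ i ≤ r) : Pv W r i = X (Sum.inl ⟨i, h⟩) :=
  dif_pos h

theorem Bv_eq_X {r : ℕ} {J : Finset ℕ} (h : J ⊆ Finset.Icc 1 r ∧ J.Nonempty) :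
    Bv W r J = X (Sum.inr (Sum.inr (Sum.inl ⟨J, h⟩))) :=
  dif_pos h

theorem Tv_eq_X {r : ℕ} {J : Finset ℕ} (h : J ⊆ Finset.Icc 1 r) :
    Tv W r J = X (Sum.inr (Sum.inr (Sum.inr ⟨J, h⟩))) :=
  dif_pos h

theorem Pv_mem_supported (r i : ℕ) : Pv W r i ∈ supported W {xVar r}ᶜ := by
  unfold Pv
  split_ifs
  exacts [X_mem_supported_of_mem Sum.inl_ne_inr, zero_mem _]

theorem Bv_mem_supported (r : ℕ) (J : Finset ℕ) : Bv W r J ∈ supported W {xVar r}ᶜ := by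
  unfold Bv
  split_ifs
  exacts [X_mem_supported_of_mem (by simp), zero_mem _]

theorem Tv_mem_supported (r : ℕ) (J : Finset ℕ) : Tv W r J ∈ supported W {xVar r}ᶜ := by
  unfold Tv
  split_ifs
  exacts [X_mem_supported_of_mem (by simp), zero_mem _]

theorem PP_mem_supported (r : ℕ) (A : Finset ℕ) : PP W r A ∈ supported W {xVar r}ᶜ :=
  prod_mem fun a _ => Pv_mem_supported r a

/-- Relations (1) and (3) of `I_n`, which depend on `n` only through `r(n)`. -/
def bocksteinRelSet (Iid : Ideal W) (r : ℕ) : Set (Rg W r) :=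
  {f | ∃ w ∈ Iid, ∃ J : Finset ℕ, f = C w * Bv W r J ∨ f = C w * Tv W r J} ∪
  {f | ∃ J J' : Finset ℕ, J ⊆ Finset.Icc 1 r ∧ J' ⊆ Finset.Icc 1 r ∧ J.Nonempty ∧
      (f = Bv W r J * Bv W r J' -
            ∑ k ∈ J, Bv W r {k} * PP W r ((J.erase k) ∩ J') *
              Bv W r (sdiff' (J.erase k) J') ∨
       f = Bv W r J * Tv W r J' -
            ∑ k ∈ J, Bv W r {k} * PP W r ((J.erase k) ∩ J') *
              Tv W r (sdiff' (J.erase k) J') ∨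
       f = Tv W r J * Bv W r J' - Bv W r J * Tv W r J' -
            Tv W r ∅ * PP W r (J ∩ J') * Bv W r (sdiff' J J') ∨
       f = Tv W r J * Tv W r J' - Bv W r J * Bv W r J' -
            Tv W r ∅ * PP W r (J ∩ J') * Tv W r (sdiff' J J'))}

theorem bocksteinRelSet_subset_supported (Iid : Ideal W) (r : ℕ) :
    bocksteinRelSet Iid r ⊆ supported W {xVar r}ᶜ := by
  have hP := PP_mem_supported (W := W) r
  have hB := Bv_mem_supported (W := W) r
  have hT := Tv_mem_supported (W := W) r
  have hC (w : W) : C w ∈ supported W {xVar r}ᶜ := Subalgebra.algebraMap_mem _ w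
  rintro f (⟨w, -, J, rfl | rfl⟩ | ⟨J, J', -, -, -, rfl | rfl | rfl | rfl⟩)
  · exact mul_mem (hC w) (hB J)
  · exact mul_mem (hC w) (hT J)
  · exact sub_mem (mul_mem (hB J) (hB J'))
      (sum_mem fun k _ => mul_mem (mul_mem (hB _) (hP _)) (hB _))
  · exact sub_mem (mul_mem (hB J) (hT J'))
      (sum_mem fun k _ => mul_mem (mul_mem (hB _) (hP _)) (hT _))
  · exact sub_mem (sub_mem (mul_mem (hT J) (hB J')) (mul_mem (hB J) (hT J')))
      (mul_mem (mul_mem (hT _) (hP _)) (hB _))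
  · exact sub_mem (sub_mem (mul_mem (hT J) (hT J')) (mul_mem (hB J) (hB J')))
      (mul_mem (mul_mem (hT _) (hP _)) (hT _))

theorem relSet_eq_union (Iid : Ideal W) (n : ℕ) :
    relSet W Iid n = bocksteinRelSet Iid (rr n) ∪
      {f | (n % 2 = 1 ∧ 3 ≤ n ∧ f = Xv W (rr n) - Tv W (rr n) {(n - 1) / 2}) ∨
        (n = 1 ∧ f = Xv W (rr n) - Tv W (rr n) ∅)} :=
  Set.union_right_comm _ _ _

theorem relIdeal_of_even (Iid : Ideal W) {n : ℕ} (hev : n % 2 = 0) :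
    relIdeal W Iid n = Ideal.span (bocksteinRelSet Iid (rr n)) := by
  rw [relIdeal, relSet_eq_union, Set.union_eq_left.2]
  rintro f (⟨hodd, -⟩ | ⟨rfl, -⟩) <;> omega

theorem exists_relIdeal_pred_of_even (Iid : Ideal W) {n : ℕ} (hn : 2 ≤ n) (hev : n % 2 = 0) :
    ∃ K, relIdeal W Iid (n - 1) = Ideal.span
      (insert (Xv W (rr (n - 1)) - Tv W (rr (n - 1)) K) (bocksteinRelSet Iid (rr (n - 1)))) := by
  refine ⟨if n = 2 then ∅ else {(n - 2) / 2}, ?_⟩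
  rw [relIdeal, relSet_eq_union, Set.insert_eq, Set.union_comm]
  congr 2
  ext f
  split_ifs with h2
  · simp [h2]
  · simp [h2, show n - 1 - 1 = n - 2 by omega, show (n - 1) % 2 = 1 by omega,
      show 3 ≤ n - 1 by omega]

theorem rr_pred_of_even {n : ℕ} (hev : n % 2 = 0) : rr n = rr (n - 1) := by
  unfold rr
  omega

/-- Stated for two equal ranks `r = r'`, since `rr n` and `rr (n - 1)` agree only
propositionally. -/
theorem exists_algEquiv_polynomial (Iid : Ideal W) {r r' : ℕ} (h : r = r') (K : Finset ℕ) :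
    ∃ e : (Rg W r ⧸ Ideal.span (bocksteinRelSet Iid r)) ≃ₐ[W]
        Polynomial (Rg W r' ⧸ Ideal.span (insert (Xv W r' - Tv W r' K) (bocksteinRelSet Iid r'))),
      e (Ideal.Quotient.mk _ (Xv W r)) = Polynomial.X ∧
      (∀ i, e (Ideal.Quotient.mk _ (Pv W r i)) =
        Polynomial.C (Ideal.Quotient.mk _ (Pv W r' i))) ∧
      (∀ J, e (Ideal.Quotient.mk _ (Bv W r J)) =
        Polynomial.C (Ideal.Quotient.mk _ (Bv W r' J))) ∧
      ∀ J, e (Ideal.Quotient.mk _ (Tv W r J)) =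
        Polynomial.C (Ideal.Quotient.mk _ (Tv W r' J)) := by
  subst h
  have hS := bocksteinRelSet_subset_supported Iid r
  have ht := Tv_mem_supported (W := W) r K
  exact ⟨quotientAlgEquivPolynomial hS ht, quotientAlgEquivPolynomial_mk_X_self hS ht,
    fun i => quotientAlgEquivPolynomial_mk_of_mem_supported hS ht (Pv_mem_supported r i),
    fun J => quotientAlgEquivPolynomial_mk_of_mem_supported hS ht (Bv_mem_supported r J),
    fun J => quotientAlgEquivPolynomial_mk_of_mem_supported hS ht (Tv_mem_supported r J)⟩

theorem mk_Phi_eq_eval_zero {n : ℕ} (hev : n % 2 = 0) {I : Ideal (Rg W (rr n))}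
    {I' : Ideal (Rg W (rr (n - 1)))}
    (e : (Rg W (rr n) ⧸ I) →ₐ[W] Polynomial (Rg W (rr (n - 1)) ⧸ I'))
    (hX : e (Ideal.Quotient.mk I (Xv W (rr n))) = Polynomial.X)
    (hP : ∀ i, e (Ideal.Quotient.mk I (Pv W (rr n) i)) =
      Polynomial.C (Ideal.Quotient.mk I' (Pv W (rr (n - 1)) i)))
    (hB : ∀ J, e (Ideal.Quotient.mk I (Bv W (rr n) J)) =
      Polynomial.C (Ideal.Quotient.mk I' (Bv W (rr (n - 1)) J)))
    (hT : ∀ J, e (Ideal.Quotient.mk I (Tv W (rr n) J)) =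
      Polynomial.C (Ideal.Quotient.mk I' (Tv W (rr (n - 1)) J)))
    (f : Rg W (rr n)) :
    Ideal.Quotient.mk I' (Phi W n f) = (e (Ideal.Quotient.mk I f)).eval 0 := by
  have key : (Ideal.Quotient.mkₐ W I').comp (Phi W n) =
      ((Polynomial.aeval (0 : Rg W (rr (n - 1)) ⧸ I')).restrictScalars W).comp
        (e.comp (Ideal.Quotient.mkₐ W I)) := by
    refine MvPolynomial.algHom_ext fun v => ?_
    simp only [AlgHom.comp_apply, Phi, aeval_X, Ideal.Quotient.mkₐ_eq_mk,
      AlgHom.restrictScalars_apply, Polynomial.coe_aeval_eq_eval]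
    rcases v with ⟨i, hi⟩ | ⟨⟩ | ⟨J, hJ⟩ | ⟨J, hJ⟩
    · rw [← Pv_eq_X hi, hP]
      simp [phiVar, hev]
    · rw [← Xv, hX]
      simp [phiVar]
    · rw [← Bv_eq_X hJ, hB]
      simp [phiVar, hev]
    · rw [← Tv_eq_X hJ, hT]
      simp [phiVar, hev]
  exact congr($key f)

/-- Lemma 3.18: for even `n ≥ 2` there is a `W`-algebra isomorphism
`R_n/I_n ≅ (R_{n−1}/I_{n−1})[X]` sending the class of `X` to the polynomial variable and
the class of each variable `P_i`, `B_J`, `T_J` to the class of the same-named variable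
(note `r(n) = r(n−1)` for `n` even); moreover `Φ̄_n : R_n/I_n → R_{n−1}/I_{n−1}`
is surjective. -/
theorem even_case_polynomial (W : Type) [CommRing W] (Iid : Ideal W) (n : ℕ)
    (hn : 2 ≤ n) (hev : n % 2 = 0) :
    (∃ e : (Rg W (rr n) ⧸ relIdeal W Iid n) ≃ₐ[W]
        Polynomial (Rg W (rr (n - 1)) ⧸ relIdeal W Iid (n - 1)),
      e (Ideal.Quotient.mk (relIdeal W Iid n) (Xv W (rr n))) = Polynomial.X ∧
      (∀ i : ℕ, 1 ≤ i → i ≤ rr n →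
        e (Ideal.Quotient.mk (relIdeal W Iid n) (Pv W (rr n) i)) =
          Polynomial.C (Ideal.Quotient.mk (relIdeal W Iid (n - 1)) (Pv W (rr (n - 1)) i))) ∧
      (∀ J : Finset ℕ, J ⊆ Finset.Icc 1 (rr n) →
        e (Ideal.Quotient.mk (relIdeal W Iid n) (Bv W (rr n) J)) =
          Polynomial.C (Ideal.Quotient.mk (relIdeal W Iid (n - 1)) (Bv W (rr (n - 1)) J)) ∧
        e (Ideal.Quotient.mk (relIdeal W Iid n) (Tv W (rr n) J)) =
          Polynomial.C (Ideal.Quotient.mk (relIdeal W Iid (n - 1)) (Tv W (rr (n - 1)) J)))) ∧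
    Function.Surjective
      (fun f : Rg W (rr n) => Ideal.Quotient.mk (relIdeal W Iid (n - 1)) (Phi W n f)) := by
  obtain ⟨K, hK⟩ := exists_relIdeal_pred_of_even Iid hn hev
  rw [relIdeal_of_even Iid hev, hK]
  obtain ⟨e, hX, hP, hB, hT⟩ := exists_algEquiv_polynomial Iid (rr_pred_of_even hev) K
  refine ⟨⟨e, hX, fun i _ _ => hP i, fun J _ => ⟨hB J, hT J⟩⟩, fun q => ?_⟩
  obtain ⟨f, hf⟩ := Ideal.Quotient.mk_surjective (e.symm (Polynomial.C q))
  exact ⟨f, by simpa [hf] using mk_Phi_eq_eval_zero hev e.toAlgHom hX hP hB hT f⟩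
end

section
/- Let n ≥ 3 be odd and assume W is a nontrivial commutative ring. Then: (a) the image of Φ̄_n : R_n/I_n → R_{n−1}/I_{n−1} contains the classes of all the variables P_i, B_J, T_J of R_{n−1}, as well as the class of X², and the classes of B_J·X and T_J·X for all J ⊆ {1,…,r(n−1)}; (b) the class of X in R_{n−1}/I_{n−1} does NOT lie in the image of Φ̄_n; (c) the W-algebra homomorphism q : R_{n−1}/I_{n−1} → W[X]/(X²) sending the class of X to X and the classes of all other variables P_i, B_J, T_J to 0 is well defined and surjective, and the quotient of R_{n−1}/I_{n−1} by the ideal generated by the Φ̄_n-images of the classes of all variables of R_n is isomorphic via q to W[X]/(X²). (This is the exact sequence R_n/I_n → R_{n−1}/I_{n−1} → W[X]/(X²) → 0 of graded W-algebras of Lemma 3.19 of the paper.) -/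
/-!
Let `q : R_{n-1} → W[X]/(X²)` send `X` to the class `ε` of `X` and every other variable to `0`.
For `n - 1` even every generator of `I_{n-1}` contains a factor `B_J` or `T_J`, so `q` factors
through `R_{n-1}/I_{n-1}`; it also kills the `Φ_n`-image of every variable, so `q ∘ Φ̄_n` only
sees constant terms and `X` cannot lie in the image of `Φ̄_n`. Conversely, for odd `n` every
variable of `R_{n-1}` other than `X`, and also `X² = Φ_n(P_{(n-1)/2})`, is the image of a
variable of `R_n`. Modulo the ideal these generate, every class is congruent to some `a + bX`,
and `q(a + bX) = a + bε` determines `a` and `b`; this gives the kernel of `q`.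
-/

open MvPolynomial

variable (W : Type) [CommRing W]

namespace Polynomial

variable {R : Type*} [CommRing R]

theorem mk_X_sq_eq_zero :
    Ideal.Quotient.mk (Ideal.span {(Polynomial.X : R[X]) ^ 2}) Polynomial.X ^ 2 = 0 := by
  rw [← map_pow, Ideal.Quotient.eq_zero_iff_mem]
  exact Ideal.mem_span_singleton_self _

theorem exists_mk_eq_C_add_C_mul_X (y : R[X] ⧸ Ideal.span {(Polynomial.X : R[X]) ^ 2}) :
    ∃ a b : R, Ideal.Quotient.mk _ (C a + C b * Polynomial.X) = y := by
  obtain ⟨p, rfl⟩ := Ideal.Quotient.mk_surjective y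
  refine ⟨p.coeff 0, p.coeff 1, Ideal.Quotient.eq.mpr ?_⟩
  rw [Ideal.mem_span_singleton, X_pow_dvd_iff]
  intro d hd
  interval_cases d <;> simp

theorem mk_C_add_C_mul_X_eq_zero_iff {a b : R} :
    Ideal.Quotient.mk (Ideal.span {(Polynomial.X : R[X]) ^ 2}) (C a + C b * Polynomial.X) = 0 ↔
      a = 0 ∧ b = 0 := by
  rw [Ideal.Quotient.eq_zero_iff_mem, Ideal.mem_span_singleton, X_pow_dvd_iff]
  constructor
  · intro h
    simpa using And.intro (h 0 (by norm_num)) (h 1 (by norm_num))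
  · rintro ⟨rfl, rfl⟩ d -
    simp

theorem algebraMap_ne_mk_X [Nontrivial R] (c : R) :
    algebraMap R (R[X] ⧸ Ideal.span {(Polynomial.X : R[X]) ^ 2}) c ≠
      Ideal.Quotient.mk _ Polynomial.X := by
  intro h
  have : Ideal.Quotient.mk (Ideal.span {(Polynomial.X : R[X]) ^ 2})
      (C c + C (-1) * Polynomial.X) = 0 := by
    rw [map_add, map_mul, ← Polynomial.algebraMap_eq, Ideal.Quotient.mk_algebraMap, h]
    simp only [map_neg, map_one]
    ring
  exact one_ne_zero (neg_eq_zero.mp (mk_C_add_C_mul_X_eq_zero_iff.mp this).2)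

end Polynomial

namespace MvPolynomial

variable {σ R : Type*} [CommRing R] [DecidableEq σ]

noncomputable def dualEval (i₀ : σ) :
    MvPolynomial σ R →ₐ[R] Polynomial R ⧸ Ideal.span {(Polynomial.X : Polynomial R) ^ 2} :=
  aeval (Pi.single i₀ (Ideal.Quotient.mk _ Polynomial.X))

variable {i₀ : σ}

@[simp]
theorem dualEval_X_self : dualEval (R := R) i₀ (X i₀) = Ideal.Quotient.mk _ Polynomial.X := by
  simp [dualEval]

@[simp]
theorem dualEval_X_of_ne {i : σ} (h : i ≠ i₀) : dualEval (R := R) i₀ (X i) = 0 := by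
  simp [dualEval, h]

theorem dualEval_C_add_C_mul_X (a b : R) :
    dualEval i₀ (C a + C b * X i₀) =
      Ideal.Quotient.mk _ (Polynomial.C a + Polynomial.C b * Polynomial.X) := by
  simp only [map_add, map_mul, dualEval_X_self, ← Polynomial.algebraMap_eq,
    Ideal.Quotient.mk_algebraMap, ← MvPolynomial.algebraMap_eq, AlgHom.commutes]

theorem dualEval_surjective : Function.Surjective (dualEval (R := R) i₀) := fun y => by
  obtain ⟨a, b, rfl⟩ := Polynomial.exists_mk_eq_C_add_C_mul_X y
  exact ⟨C a + C b * X i₀, dualEval_C_add_C_mul_X a b⟩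

theorem exists_sub_C_add_C_mul_X_mem {K : Ideal (MvPolynomial σ R)}
    (hX : ∀ i ≠ i₀, X i ∈ K) (hsq : X i₀ ^ 2 ∈ K) (f : MvPolynomial σ R) :
    ∃ a b : R, f - (C a + C b * X i₀) ∈ K := by
  induction f using MvPolynomial.induction_on with
  | C a => exact ⟨a, 0, by simp⟩
  | add f g hf hg =>
    obtain ⟨a, b, hf⟩ := hf
    obtain ⟨a', b', hg⟩ := hg
    refine ⟨a + a', b + b', ?_⟩
    convert K.add_mem hf hg using 1
    simp only [C_add]
    ring
  | mul_X f i hf =>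
    obtain ⟨a, b, hf⟩ := hf
    by_cases hi : i = i₀
    · subst hi
      refine ⟨0, a, ?_⟩
      convert K.add_mem (K.mul_mem_right (X i) hf) (K.mul_mem_left (C b) hsq) using 1
      simp only [C_0]
      ring
    · exact ⟨0, 0, by simpa using K.mul_mem_left f (hX i hi)⟩

theorem ker_dualEval_le {K : Ideal (MvPolynomial σ R)}
    (hX : ∀ i ≠ i₀, X i ∈ K) (hsq : X i₀ ^ 2 ∈ K) :
    RingHom.ker (dualEval (R := R) i₀) ≤ K := by
  intro f hf
  obtain ⟨a, b, hab⟩ := exists_sub_C_add_C_mul_X_mem (K := K ⊓ RingHom.ker (dualEval i₀))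
    (fun i hi => ⟨hX i hi, dualEval_X_of_ne hi⟩)
    ⟨hsq, by simp [Polynomial.mk_X_sq_eq_zero]⟩ f
  have hzero : dualEval i₀ (C a + C b * X i₀) = 0 := by
    rw [← sub_sub_cancel f (C a + C b * X i₀), map_sub, RingHom.mem_ker.mp hf, hab.2, sub_zero]
  rw [dualEval_C_add_C_mul_X, Polynomial.mk_C_add_C_mul_X_eq_zero_iff] at hzero
  simpa [hzero.1, hzero.2] using hab.1

end MvPolynomial

section EulerEvaluation

variable {W : Type} [CommRing W]

noncomputable def eulerEval (r : ℕ) :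
    Rg W r →ₐ[W] Polynomial W ⧸ Ideal.span {(Polynomial.X : Polynomial W) ^ 2} :=
  dualEval (Sum.inr (Sum.inl ()))

theorem eulerEval_Xv (r : ℕ) :
    eulerEval r (Xv W r) = Ideal.Quotient.mk _ Polynomial.X :=
  dualEval_X_self

theorem eulerEval_Pv (r i : ℕ) : eulerEval r (Pv W r i) = 0 := by
  unfold Pv; split <;> simp [eulerEval]

theorem eulerEval_Bv (r : ℕ) (J : Finset ℕ) : eulerEval r (Bv W r J) = 0 := by
  unfold Bv; split <;> simp [eulerEval]

theorem eulerEval_Tv (r : ℕ) (J : Finset ℕ) : eulerEval r (Tv W r J) = 0 := by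
  unfold Tv; split <;> simp [eulerEval]

theorem eulerEval_phiVar (n : ℕ) (v : GVar (rr n)) :
    eulerEval (rr (n - 1)) (phiVar W n v) = 0 := by
  rcases v with p | u | p | p <;>
    simp [phiVar, apply_ite, eulerEval_Xv, eulerEval_Pv, eulerEval_Bv, eulerEval_Tv,
      Polynomial.mk_X_sq_eq_zero]

theorem eulerEval_Phi (n : ℕ) (f : Rg W (rr n)) :
    eulerEval (rr (n - 1)) (Phi W n f) = algebraMap W _ (constantCoeff f) := by
  have hcomp : (eulerEval (rr (n - 1))).comp (Phi W n) = aeval fun _ => 0 :=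
    algHom_ext fun v => by simp [Phi, eulerEval_phiVar]
  rw [← aeval_zero', ← hcomp, AlgHom.comp_apply]

/-- The relation `X = T_{(n-1)/2}`, the only one not killed by `eulerEval`, is imposed for
odd `n` only. -/
theorem relIdeal_le_ker_eulerEval (Iid : Ideal W) {n : ℕ} (heven : n % 2 = 0) :
    relIdeal W Iid n ≤ RingHom.ker (eulerEval (rr n)) := by
  rw [relIdeal, Ideal.span_le]
  rintro f ((⟨w, -, J, rfl | rfl⟩ | (⟨h, -⟩ | ⟨rfl, -⟩)) |
    ⟨J, J', -, -, -, rfl | rfl | rfl | rfl⟩)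
  all_goals first
    | omega
    | simp [eulerEval_Bv, eulerEval_Tv]

noncomputable def eulerEvalQuot (Iid : Ideal W) {n : ℕ} (heven : n % 2 = 0) :
    (Rg W (rr n) ⧸ relIdeal W Iid n) →ₐ[W]
      Polynomial W ⧸ Ideal.span {(Polynomial.X : Polynomial W) ^ 2} :=
  Ideal.Quotient.liftₐ _ (eulerEval (rr n)) fun _ hf => relIdeal_le_ker_eulerEval Iid heven hf

@[simp]
theorem eulerEvalQuot_mk (Iid : Ideal W) {n : ℕ} (heven : n % 2 = 0) (f : Rg W (rr n)) :
    eulerEvalQuot Iid heven (Ideal.Quotient.mk _ f) = eulerEval (rr n) f :=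
  rfl

theorem eulerEvalQuot_surjective (Iid : Ideal W) {n : ℕ} (heven : n % 2 = 0) :
    Function.Surjective (eulerEvalQuot Iid heven) := fun y => by
  obtain ⟨f, rfl⟩ : ∃ f, eulerEval (rr n) f = y := dualEval_surjective y
  exact ⟨Ideal.Quotient.mk _ f, rfl⟩

end EulerEvaluation

section OddCase

variable {W : Type} [CommRing W] {n : ℕ}

theorem notMem_of_subset_Icc_rr_sub_one (hodd : n % 2 = 1) {J : Finset ℕ}
    (hJ : J ⊆ Finset.Icc 1 (rr (n - 1))) : (n - 1) / 2 ∉ J := fun h => by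
  have := Finset.mem_Icc.mp (hJ h)
  unfold rr at this
  omega

theorem Icc_rr_sub_one_subset_Icc_rr : Finset.Icc 1 (rr (n - 1)) ⊆ Finset.Icc 1 (rr n) :=
  Finset.Icc_subset_Icc le_rfl (Nat.div_le_div_right (by omega))

theorem insert_subset_Icc_rr (hn : 3 ≤ n) {J : Finset ℕ}
    (hJ : J ⊆ Finset.Icc 1 (rr (n - 1))) :
    insert ((n - 1) / 2) J ⊆ Finset.Icc 1 (rr n) :=
  Finset.insert_subset (Finset.mem_Icc.mpr ⟨by omega, le_rfl⟩)
    (hJ.trans Icc_rr_sub_one_subset_Icc_rr)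

theorem exists_phiVar_eq_Pv {i : ℕ} (hi : 1 ≤ i) (hi' : i ≤ rr (n - 1)) :
    ∃ u, phiVar W n u = Pv W (rr (n - 1)) i := by
  refine ⟨Sum.inl ⟨i, hi, Finset.mem_Icc.mp (Icc_rr_sub_one_subset_Icc_rr
    (Finset.mem_Icc.mpr ⟨hi, hi'⟩)) |>.2⟩, if_neg ?_⟩
  rintro ⟨hodd, h : i = (n - 1) / 2⟩
  unfold rr at hi'
  omega

/-- `B_∅ = 0` is the image of the variable `X`. -/
theorem exists_phiVar_eq_Bv {J : Finset ℕ} (hJ : J ⊆ Finset.Icc 1 (rr (n - 1))) :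
    ∃ u, phiVar W n u = Bv W (rr (n - 1)) J := by
  rcases J.eq_empty_or_nonempty with rfl | hne
  · exact ⟨Sum.inr (Sum.inl ()), by simp [phiVar, Bv]⟩
  · exact ⟨Sum.inr (Sum.inr (Sum.inl ⟨J, hJ.trans Icc_rr_sub_one_subset_Icc_rr, hne⟩)),
      if_neg fun h => notMem_of_subset_Icc_rr_sub_one h.1 hJ h.2⟩

theorem exists_phiVar_eq_Tv {J : Finset ℕ} (hJ : J ⊆ Finset.Icc 1 (rr (n - 1))) :
    ∃ u, phiVar W n u = Tv W (rr (n - 1)) J :=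
  ⟨Sum.inr (Sum.inr (Sum.inr ⟨J, hJ.trans Icc_rr_sub_one_subset_Icc_rr⟩)),
    if_neg fun h => notMem_of_subset_Icc_rr_sub_one h.1 hJ h.2⟩

theorem exists_phiVar_eq_Bv_mul_Xv (hn : 3 ≤ n) (hodd : n % 2 = 1) {J : Finset ℕ}
    (hJ : J ⊆ Finset.Icc 1 (rr (n - 1))) :
    ∃ u, phiVar W n u = Bv W (rr (n - 1)) J * Xv W (rr (n - 1)) := by
  refine ⟨Sum.inr (Sum.inr (Sum.inr ⟨insert ((n - 1) / 2) J, insert_subset_Icc_rr hn hJ⟩)),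
    ?_⟩
  simp only [phiVar]
  rw [if_pos ⟨hodd, J.mem_insert_self _⟩,
    Finset.erase_insert (notMem_of_subset_Icc_rr_sub_one hodd hJ)]

theorem exists_phiVar_eq_Tv_mul_Xv (hn : 3 ≤ n) (hodd : n % 2 = 1) {J : Finset ℕ}
    (hJ : J ⊆ Finset.Icc 1 (rr (n - 1))) :
    ∃ u, phiVar W n u = Tv W (rr (n - 1)) J * Xv W (rr (n - 1)) := by
  refine ⟨Sum.inr (Sum.inr (Sum.inl ⟨insert ((n - 1) / 2) J, insert_subset_Icc_rr hn hJ,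
    Finset.insert_nonempty _ _⟩)), ?_⟩
  simp only [phiVar]
  rw [if_pos ⟨hodd, J.mem_insert_self _⟩,
    Finset.erase_insert (notMem_of_subset_Icc_rr_sub_one hodd hJ)]

theorem exists_phiVar_eq_Xv_sq (hn : 3 ≤ n) (hodd : n % 2 = 1) :
    ∃ u, phiVar W n u = Xv W (rr (n - 1)) ^ 2 :=
  ⟨Sum.inl ⟨(n - 1) / 2, by omega, le_rfl⟩, if_pos ⟨hodd, rfl⟩⟩

theorem exists_phiVar_eq_X {v : GVar (rr (n - 1))} (hv : v ≠ Sum.inr (Sum.inl ())) :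
    ∃ u, phiVar W n u = X v := by
  rcases v with ⟨i, hi⟩ | u | ⟨J, hJ, hne⟩ | ⟨J, hJ⟩
  · simpa [Pv, hi] using exists_phiVar_eq_Pv (W := W) (n := n) hi.1 hi.2
  · exact absurd rfl hv
  · simpa [Bv, hJ, hne] using exists_phiVar_eq_Bv (W := W) (n := n) hJ
  · simpa [Tv, hJ] using exists_phiVar_eq_Tv (W := W) (n := n) hJ

theorem mk_mem_range_mk_Phi (I : Ideal (Rg W (rr (n - 1)))) {g : Rg W (rr (n - 1))}
    (hg : ∃ u, phiVar W n u = g) :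
    Ideal.Quotient.mk I g ∈ Set.range fun f => Ideal.Quotient.mk I (Phi W n f) := by
  obtain ⟨u, rfl⟩ := hg
  exact ⟨X u, by simp [Phi]⟩

/-- `eulerEval ∘ Φ_n` only sees constant coefficients, whereas `eulerEval X = ε`. -/
theorem mk_Xv_notMem_range_mk_Phi [Nontrivial W] (Iid : Ideal W) (hodd : n % 2 = 1) :
    Ideal.Quotient.mk (relIdeal W Iid (n - 1)) (Xv W (rr (n - 1))) ∉
      Set.range fun f => Ideal.Quotient.mk (relIdeal W Iid (n - 1)) (Phi W n f) := by
  rintro ⟨f, hf⟩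
  have hker := relIdeal_le_ker_eulerEval Iid (by omega) (Ideal.Quotient.eq.mp hf)
  rw [RingHom.mem_ker, map_sub, eulerEval_Phi, eulerEval_Xv, sub_eq_zero] at hker
  exact Polynomial.algebraMap_ne_mk_X _ hker

theorem ker_eulerEvalQuot (Iid : Ideal W) (hn : 3 ≤ n) (hodd : n % 2 = 1)
    (heven : (n - 1) % 2 = 0) :
    RingHom.ker (eulerEvalQuot Iid heven) = Ideal.span (Set.range fun v : GVar (rr n) =>
      Ideal.Quotient.mk (relIdeal W Iid (n - 1)) (Phi W n (X v))) := by
  set K := Ideal.span (Set.range fun v : GVar (rr n) =>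
    Ideal.Quotient.mk (relIdeal W Iid (n - 1)) (Phi W n (X v)))
  have mem_K {g : Rg W (rr (n - 1))} (hg : ∃ u, phiVar W n u = g) :
      Ideal.Quotient.mk _ g ∈ K := by
    obtain ⟨u, rfl⟩ := hg
    exact Ideal.subset_span ⟨u, by simp [Phi]⟩
  refine le_antisymm ?_ ?_
  · intro x hx
    obtain ⟨f, rfl⟩ := Ideal.Quotient.mk_surjective x
    exact ker_dualEval_le (K := K.comap (Ideal.Quotient.mk _))
      (fun v hv => mem_K (exists_phiVar_eq_X hv)) (mem_K (exists_phiVar_eq_Xv_sq hn hodd)) hx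
  · rw [Ideal.span_le]
    rintro _ ⟨v, rfl⟩
    simp [Phi, eulerEval_phiVar]

end OddCase

/-- Lemma 3.19: for odd `n ≥ 3` and `W` nontrivial, with `im` the image of
`Φ̄_n : R_n/I_n → R_{n−1}/I_{n−1}`:
(a) the classes of the variables `P_i`, `B_J`, `T_J` of `R_{n−1}`, and the classes of
`X²`, `B_J·X`, `T_J·X`, all lie in `im`;
(b) the class of `X` does not lie in `im`;
(c) there is a surjective `W`-algebra homomorphism `q : R_{n−1}/I_{n−1} → W[X]/(X²)`
sending the class of `X` to `X` and the classes of all other variables to `0`, whose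
kernel is the ideal generated by the `Φ̄_n`-images of the classes of the variables of
`R_n`; i.e. `R_n/I_n → R_{n−1}/I_{n−1} → W[X]/(X²) → 0` is exact. -/
theorem odd_case_exact_sequence (W : Type) [CommRing W] [Nontrivial W] (Iid : Ideal W)
    (n : ℕ) (hn : 3 ≤ n) (hodd : n % 2 = 1) :
    (∀ i : ℕ, 1 ≤ i → i ≤ rr (n - 1) →
      Ideal.Quotient.mk (relIdeal W Iid (n - 1)) (Pv W (rr (n - 1)) i) ∈
        Set.range (fun f : Rg W (rr n) =>
          Ideal.Quotient.mk (relIdeal W Iid (n - 1)) (Phi W n f))) ∧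
    (∀ J : Finset ℕ, J ⊆ Finset.Icc 1 (rr (n - 1)) →
      Ideal.Quotient.mk (relIdeal W Iid (n - 1)) (Bv W (rr (n - 1)) J) ∈
        Set.range (fun f : Rg W (rr n) =>
          Ideal.Quotient.mk (relIdeal W Iid (n - 1)) (Phi W n f)) ∧
      Ideal.Quotient.mk (relIdeal W Iid (n - 1)) (Tv W (rr (n - 1)) J) ∈
        Set.range (fun f : Rg W (rr n) =>
          Ideal.Quotient.mk (relIdeal W Iid (n - 1)) (Phi W n f)) ∧
      Ideal.Quotient.mk (relIdeal W Iid (n - 1)) (Bv W (rr (n - 1)) J * Xv W (rr (n - 1))) ∈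
        Set.range (fun f : Rg W (rr n) =>
          Ideal.Quotient.mk (relIdeal W Iid (n - 1)) (Phi W n f)) ∧
      Ideal.Quotient.mk (relIdeal W Iid (n - 1)) (Tv W (rr (n - 1)) J * Xv W (rr (n - 1))) ∈
        Set.range (fun f : Rg W (rr n) =>
          Ideal.Quotient.mk (relIdeal W Iid (n - 1)) (Phi W n f))) ∧
    (Ideal.Quotient.mk (relIdeal W Iid (n - 1)) ((Xv W (rr (n - 1))) ^ 2) ∈
      Set.range (fun f : Rg W (rr n) =>
        Ideal.Quotient.mk (relIdeal W Iid (n - 1)) (Phi W n f))) ∧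
    (Ideal.Quotient.mk (relIdeal W Iid (n - 1)) (Xv W (rr (n - 1))) ∉
      Set.range (fun f : Rg W (rr n) =>
        Ideal.Quotient.mk (relIdeal W Iid (n - 1)) (Phi W n f))) ∧
    (∃ q : (Rg W (rr (n - 1)) ⧸ relIdeal W Iid (n - 1)) →ₐ[W]
        (Polynomial W ⧸ Ideal.span {(Polynomial.X : Polynomial W) ^ 2}),
      q (Ideal.Quotient.mk (relIdeal W Iid (n - 1)) (Xv W (rr (n - 1)))) =
        Ideal.Quotient.mk (Ideal.span {(Polynomial.X : Polynomial W) ^ 2}) Polynomial.X ∧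
      (∀ i : ℕ, 1 ≤ i → i ≤ rr (n - 1) →
        q (Ideal.Quotient.mk (relIdeal W Iid (n - 1)) (Pv W (rr (n - 1)) i)) = 0) ∧
      (∀ J : Finset ℕ, J ⊆ Finset.Icc 1 (rr (n - 1)) →
        q (Ideal.Quotient.mk (relIdeal W Iid (n - 1)) (Bv W (rr (n - 1)) J)) = 0 ∧
        q (Ideal.Quotient.mk (relIdeal W Iid (n - 1)) (Tv W (rr (n - 1)) J)) = 0) ∧
      Function.Surjective q ∧
      RingHom.ker q = Ideal.span (Set.range (fun v : GVar (rr n) =>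
        Ideal.Quotient.mk (relIdeal W Iid (n - 1)) (Phi W n (X v))))) := by
  have heven : (n - 1) % 2 = 0 := by omega
  have mem_range {g : Rg W (rr (n - 1))} (hg : ∃ u, phiVar W n u = g) :=
    mk_mem_range_mk_Phi (relIdeal W Iid (n - 1)) hg
  refine ⟨fun i hi hi' => mem_range (exists_phiVar_eq_Pv hi hi'),
    fun J hJ => ⟨mem_range (exists_phiVar_eq_Bv hJ), mem_range (exists_phiVar_eq_Tv hJ),
      mem_range (exists_phiVar_eq_Bv_mul_Xv hn hodd hJ),
      mem_range (exists_phiVar_eq_Tv_mul_Xv hn hodd hJ)⟩,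
    mem_range (exists_phiVar_eq_Xv_sq hn hodd), mk_Xv_notMem_range_mk_Phi Iid hodd,
    eulerEvalQuot Iid heven, eulerEval_Xv _, fun i _ _ => eulerEval_Pv _ i,
    fun J _ => ⟨eulerEval_Bv _ J, eulerEval_Tv _ J⟩, eulerEvalQuot_surjective Iid heven,
    ker_eulerEvalQuot Iid hn hodd heven⟩
end
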